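/- Let p be a prime, Γ ⊂ SL_d(𝔽_p) a subgroup, μ_0 a probability measure on Γ, and η a probability measure on 𝔽_p^d. Assume: (1) the only Γ-orbit in 𝔽_p^d of cardinality less than p is the singleton {0}; (2) ‖ℒ_0^θ(μ_0)‖ ≤ 2^{-5}; (3) for every x ∈ 𝔽_p^d, η(x) ≤ (40/41) ‖η‖_{L²}; and (4) ‖η̂‖_{L̂⁴} ≥ 19 p^{-1/4}. Then ‖ 𝒜̂^θ(μ_0) |η̂| ‖_{L̂⁴} ≤ 2^{-2^{-34}} ‖η̂‖_{L̂⁴}. -/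

import Mathlib

set_option synthInstance.maxHeartbeats 1000000
set_option maxHeartbeats 1000000
set_option linter.unusedSectionVars false

open MeasureTheory Matrix Filter Metric
open scoped BigOperators ENNReal Real

noncomputable section

instance : Fact ((0:ℝ) < 1) := ⟨one_pos⟩

abbrev SLZ (d : ℕ) := Matrix.SpecialLinearGroup (Fin d) ℤ

abbrev Torus (d : ℕ) := Fin d → AddCircle (1 : ℝ)

instance (d : ℕ) : MeasurableSpace (SLZ d) := ⊤

/-- Generic affine group `G ⋉ V` where `G` acts on `V` by additive automorphisms. -/
@[ext] structure AffOf (G V : Type*) where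
  lin : G
  trans : V

namespace AffOf

variable {G V : Type*} [Group G] [AddCommGroup V] [DistribMulAction G V]

instance : Mul (AffOf G V) := ⟨fun g h => ⟨g.lin * h.lin, g.lin • h.trans + g.trans⟩⟩
instance : One (AffOf G V) := ⟨⟨1, 0⟩⟩
instance : Inv (AffOf G V) := ⟨fun g => ⟨g.lin⁻¹, -(g.lin⁻¹ • g.trans)⟩⟩

@[simp] lemma mul_lin (g h : AffOf G V) : (g * h).lin = g.lin * h.lin := rfl
@[simp] lemma mul_trans (g h : AffOf G V) : (g * h).trans = g.lin • h.trans + g.trans := rfl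
@[simp] lemma one_lin : (1 : AffOf G V).lin = 1 := rfl
@[simp] lemma one_trans : (1 : AffOf G V).trans = 0 := rfl

instance : Group (AffOf G V) where
  mul_assoc a b c := by
    ext
    · exact mul_assoc _ _ _
    · show (a.lin * b.lin) • c.trans + (a.lin • b.trans + a.trans)
        = a.lin • (b.lin • c.trans + b.trans) + a.trans
      rw [mul_smul, smul_add, add_assoc]
  one_mul a := by
    ext
    · exact one_mul _
    · show (1 : G) • a.trans + 0 = a.trans
      simp
  mul_one a := by
    ext
    · exact mul_one _
    · show a.lin • (0 : V) + a.trans = a.trans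
      simp
  inv_mul_cancel a := by
    ext
    · exact inv_mul_cancel _
    · show a.lin⁻¹ • a.trans + -(a.lin⁻¹ • a.trans) = 0
      simp

/-- The projection onto the linear part, as a group homomorphism. -/
def linHom : AffOf G V →* G where
  toFun := AffOf.lin
  map_one' := rfl
  map_mul' _ _ := rfl

/-- The affine action of `AffOf G V` on `V`. -/
def aff (g : AffOf G V) (v : V) : V := g.lin • v + g.trans

/-- Equivalence with the product type (used for `Fintype`/measurable structures). -/
def equivProd : AffOf G V ≃ G × V where
  toFun g := (g.lin, g.trans)
  invFun p := ⟨p.1, p.2⟩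
  left_inv _ := rfl
  right_inv _ := rfl

end AffOf

instance {G V : Type*} [Fintype G] [Fintype V] : Fintype (AffOf G V) :=
  Fintype.ofEquiv _ (AffOf.equivProd (G := G) (V := V)).symm

instance {G V : Type*} [DecidableEq G] [DecidableEq V] : DecidableEq (AffOf G V) :=
  fun a b => decidable_of_iff (a.lin = b.lin ∧ a.trans = b.trans) AffOf.ext_iff.symm

instance {G V : Type*} [MeasurableSpace G] [MeasurableSpace V] :
    MeasurableSpace (AffOf G V) :=
  MeasurableSpace.comap AffOf.equivProd inferInstance

/-- The action of `SL_d(ℤ)` on the torus `𝕋^d`. -/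
instance torusAction (d : ℕ) : DistribMulAction (SLZ d) (Torus d) where
  smul γ x := fun i => ∑ j, (γ.1 i j) • x j
  one_smul x := by
    funext i
    show ∑ j, ((1 : SLZ d).1 i j) • x j = x i
    simp [Matrix.one_apply, ite_smul]
  mul_smul γ₁ γ₂ x := by
    funext i
    show ∑ j, ((γ₁ * γ₂).1 i j) • x j = ∑ k, (γ₁.1 i k) • ∑ j, (γ₂.1 k j) • x j
    simp only [Matrix.SpecialLinearGroup.coe_mul, Matrix.mul_apply, Finset.sum_smul,
      Finset.smul_sum, mul_smul]
    exact Finset.sum_comm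
  smul_zero γ := by
    funext i
    show ∑ j, (γ.1 i j) • (0 : AddCircle (1:ℝ)) = 0
    simp
  smul_add γ x y := by
    funext i
    show ∑ j, (γ.1 i j) • (x j + y j) = (∑ j, (γ.1 i j) • x j) + ∑ j, (γ.1 i j) • y j
    simp [smul_add, Finset.sum_add_distrib]

/-- `SL_d(ℤ) ⋉ 𝕋^d`. -/
abbrev Aff (d : ℕ) := AffOf (SLZ d) (Torus d)

/-- Cast an integer matrix in `SL_d(ℤ)` to a real matrix. -/
def toR {d : ℕ} (γ : SLZ d) : Matrix (Fin d) (Fin d) ℝ := γ.1.map (Int.cast : ℤ → ℝ)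

/-- Cast an integer matrix in `SL_d(ℤ)` to a rational matrix. -/
def toQ {d : ℕ} (γ : SLZ d) : Matrix (Fin d) (Fin d) ℚ := γ.1.map (Int.cast : ℤ → ℚ)

/-- Cast an integer matrix in `SL_d(ℤ)` to a complex matrix. -/
def toC {d : ℕ} (γ : SLZ d) : Matrix (Fin d) (Fin d) ℂ := γ.1.map (Int.cast : ℤ → ℂ)

lemma toR_one {d : ℕ} : toR (1 : SLZ d) = 1 := by
  rw [toR, Matrix.SpecialLinearGroup.coe_one, Matrix.map_one _ Int.cast_zero Int.cast_one]

lemma toR_mul {d : ℕ} (γ₁ γ₂ : SLZ d) : toR (γ₁ * γ₂) = toR γ₁ * toR γ₂ := by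
  simp only [toR, Matrix.SpecialLinearGroup.coe_mul]
  exact Matrix.map_mul (f := Int.castRingHom ℝ)

/-- The action of `SL_d(ℤ)` on `ℝ^d`. -/
instance realAction (d : ℕ) : DistribMulAction (SLZ d) (Fin d → ℝ) where
  smul γ v := (toR γ).mulVec v
  one_smul v := by show (toR 1).mulVec v = v; rw [toR_one, Matrix.one_mulVec]
  mul_smul γ₁ γ₂ v := by
    show (toR (γ₁ * γ₂)).mulVec v = (toR γ₁).mulVec ((toR γ₂).mulVec v)
    rw [toR_mul, Matrix.mulVec_mulVec]
  smul_zero γ := by show (toR γ).mulVec 0 = 0; rw [Matrix.mulVec_zero]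
  smul_add γ v w := by
    show (toR γ).mulVec (v + w) = (toR γ).mulVec v + (toR γ).mulVec w
    rw [Matrix.mulVec_add]

/-- `SL_d(ℤ) ⋉ ℝ^d`. -/
abbrev AffR (d : ℕ) := AffOf (SLZ d) (Fin d → ℝ)

/-- The action of `SL_d(𝔽_p)` on `𝔽_p^d`. -/
instance modpAction (p d : ℕ) :
    DistribMulAction (Matrix.SpecialLinearGroup (Fin d) (ZMod p)) (Fin d → ZMod p) where
  smul γ v := γ.1.mulVec v
  one_smul v := by
    show (1 : Matrix.SpecialLinearGroup (Fin d) (ZMod p)).1.mulVec v = v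
    simp [Matrix.SpecialLinearGroup.coe_one, Matrix.one_mulVec]
  mul_smul γ₁ γ₂ v := by
    show (γ₁ * γ₂).1.mulVec v = γ₁.1.mulVec (γ₂.1.mulVec v)
    rw [Matrix.SpecialLinearGroup.coe_mul, Matrix.mulVec_mulVec]
  smul_zero γ := Matrix.mulVec_zero _
  smul_add γ v w := Matrix.mulVec_add _ _ _

/-- `SL_d(𝔽_p) ⋉ 𝔽_p^d`. -/
abbrev AffP (p d : ℕ) := AffOf (Matrix.SpecialLinearGroup (Fin d) (ZMod p)) (Fin d → ZMod p)

instance (p d : ℕ) : MeasurableSpace (Matrix.SpecialLinearGroup (Fin d) (ZMod p)) := ⊤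
instance (p d : ℕ) : MeasurableSpace (Fin d → ZMod p) := ⊤

/-- The projection of `ℝ^d` onto the torus. -/
def projT {d : ℕ} (v : Fin d → ℝ) : Torus d := fun i => (v i : AddCircle (1:ℝ))

/-- The affine action of `SL_d(ℤ) ⋉ ℝ^d` on the torus. -/
def affRT {d : ℕ} (g : AffR d) (x : Torus d) : Torus d := g.lin • x + projT g.trans

/-- The support of a measure on a discrete-like space. -/
def msupport {α : Type*} [MeasurableSpace α] (μ : Measure α) : Set α := {a | μ {a} ≠ 0}

/-- Convolution of two measures on a group. -/
def mconv {G : Type*} [Mul G] [MeasurableSpace G] (μ ν : Measure G) : Measure G :=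
  (μ.prod ν).map fun p => p.1 * p.2

/-- Convolution power `μ^{*n}` (with `μ^{*0} = δ_1`). -/
def mconvPow {G : Type*} [Monoid G] [MeasurableSpace G] (μ : Measure G) : ℕ → Measure G
  | 0 => Measure.dirac 1
  | n + 1 => mconv μ (mconvPow μ n)

/-- Convolution of a measure on a set of transformations with a measure on a space. -/
def aconv {G X : Type*} [MeasurableSpace G] [MeasurableSpace X] (act : G → X → X)
    (μ : Measure G) (ν : Measure X) : Measure X :=
  (μ.prod ν).map fun p => act p.1 p.2

/-- `μ^{*n} * δ_x` for the affine random walk on the torus. -/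
def walk {d : ℕ} (μ : Measure (Aff d)) (x : Torus d) (n : ℕ) : Measure (Torus d) :=
  aconv AffOf.aff (mconvPow μ n) (Measure.dirac x)

/-- The Fourier coefficient `ν̂(a) = ∫ e^{2πi⟨a,x⟩} dν(x)` of a measure on the torus. -/
def fcoef {d : ℕ} (ν : Measure (Torus d)) (a : Fin d → ℤ) : ℂ :=
  ∫ x, (∏ i, fourier (a i) (x i)) ∂ν

/-- A sup-type norm of an element of `SL_d(ℤ)`. -/
def matNorm {d : ℕ} (g : SLZ d) : ℝ := ‖fun ij : Fin d × Fin d => (g.1 ij.1 ij.2 : ℝ)‖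

/-- `hasLyap μ₀ l` : the top Lyapunov exponent of `μ₀` exists and equals `l`. -/
def hasLyap {d : ℕ} (μ₀ : Measure (SLZ d)) (l : ℝ) : Prop :=
  Tendsto (fun n : ℕ => (n : ℝ)⁻¹ * ∫ g, Real.log (matNorm g) ∂(mconvPow μ₀ n)) atTop (nhds l)

/-- Strong irreducibility of the action of a set of matrices on `ℝ^d`: no nontrivial finite
union of proper nonzero subspaces is invariant. -/
def SIrredR {d : ℕ} (S : Set (SLZ d)) : Prop :=
  ¬ ∃ F : Finset (Submodule ℝ (Fin d → ℝ)), F.Nonempty ∧ (∀ W ∈ F, W ≠ ⊥ ∧ W ≠ ⊤) ∧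
      ∀ γ ∈ S, ∀ W ∈ F, W.map (Matrix.toLin' (toR γ)) ∈ F

/-- Strong irreducibility of the action of a set of matrices on `ℚ^d`. -/
def SIrredQ {d : ℕ} (S : Set (SLZ d)) : Prop :=
  ¬ ∃ F : Finset (Submodule ℚ (Fin d → ℚ)), F.Nonempty ∧ (∀ W ∈ F, W ≠ ⊥ ∧ W ≠ ⊤) ∧
      ∀ γ ∈ S, ∀ W ∈ F, W.map (Matrix.toLin' (toQ γ)) ∈ F

/-- Irreducibility of the action of a set of matrices on `ℚ^d`. -/
def IrredQ {d : ℕ} (S : Set (SLZ d)) : Prop :=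
  ¬ ∃ W : Submodule ℚ (Fin d → ℚ), W ≠ ⊥ ∧ W ≠ ⊤ ∧
      ∀ γ ∈ S, W.map (Matrix.toLin' (toQ γ)) = W

open scoped Classical in
/-- A proximal element : a simple dominant eigenvalue (over `ℂ`). -/
def IsProximal {d : ℕ} (γ : SLZ d) : Prop :=
  ∃ χ : ℂ, (Matrix.charpoly (toC γ)).roots.count χ = 1 ∧
    ∀ χ' ∈ (Matrix.charpoly (toC γ)).roots, χ' ≠ χ → ‖χ'‖ < ‖χ‖

/-- The Zariski topology on `d × d` complex matrices. -/
def zTop (d : ℕ) : TopologicalSpace (Matrix (Fin d) (Fin d) ℂ) :=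
  TopologicalSpace.generateFrom
    { U | ∃ f : MvPolynomial (Fin d × Fin d) ℂ,
        U = { M | MvPolynomial.eval (fun ij => M ij.1 ij.2) f ≠ 0 } }

/-- Zariski closure of a set of complex matrices. -/
def zclosure {d : ℕ} (S : Set (Matrix (Fin d) (Fin d) ℂ)) : Set (Matrix (Fin d) (Fin d) ℂ) :=
  @closure _ (zTop d) S

/-- The Zariski closure of (the complexification of) `S ⊆ SL_d(ℤ)` is connected. -/
def ZClosureConnected {d : ℕ} (S : Set (SLZ d)) : Prop :=
  @IsConnected _ (zTop d) (zclosure (toC '' S))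

/-- The Zariski closure of `S ⊆ SL_d(ℤ)` is semisimple: every Zariski closed and connected
subgroup which is normalized by the closure and solvable is trivial. -/
def ZClosureSemisimple {d : ℕ} (S : Set (SLZ d)) : Prop :=
  ∀ H : Subgroup (Matrix.GeneralLinearGroup (Fin d) ℂ),
    ((fun g : Matrix.GeneralLinearGroup (Fin d) ℂ => (g : Matrix (Fin d) (Fin d) ℂ)) ''
        (H : Set (Matrix.GeneralLinearGroup (Fin d) ℂ)) ⊆ zclosure (toC '' S)) →
    @IsClosed _ (zTop d) ((fun g : Matrix.GeneralLinearGroup (Fin d) ℂ =>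
        (g : Matrix (Fin d) (Fin d) ℂ)) '' (H : Set (Matrix.GeneralLinearGroup (Fin d) ℂ))) →
    @IsConnected _ (zTop d) ((fun g : Matrix.GeneralLinearGroup (Fin d) ℂ =>
        (g : Matrix (Fin d) (Fin d) ℂ)) '' (H : Set (Matrix.GeneralLinearGroup (Fin d) ℂ))) →
    (∀ g : Matrix.GeneralLinearGroup (Fin d) ℂ,
        (g : Matrix (Fin d) (Fin d) ℂ) ∈ zclosure (toC '' S) →
        ∀ h ∈ H, g * h * g⁻¹ ∈ H) →
    IsSolvable H → H = ⊥

/-- The set `𝒫_Q` of data `(u, x)` giving a trapped orbit of height at most `Q`. -/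
def PQ {d : ℕ} {Ω : Type*} (γ : Ω → SLZ d) (Q : ℝ) : Set ((Ω → Torus d) × Torus d) :=
  { p | ∃ q : ℕ, 1 ≤ q ∧ (q : ℝ) ≤ Q ∧
      ∀ ω : Ω, ∀ i : Fin d,
        q • ((AffOf.aff (⟨γ ω, p.1 ω⟩ : Aff d) p.2 - p.2) i) = 0 }

/-- `α`-energy of a measure on the torus. -/
def energy {d : ℕ} (α : ℝ) (ν : Measure (Torus d)) : ℝ≥0∞ :=
  ∫⁻ q in {q : Torus d × Torus d | q.1 ≠ q.2},
    ENNReal.ofReal ((dist q.1 q.2) ^ (-α)) ∂(ν.prod ν)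

/-- A set is `r`-separated. -/
def IsSep {X : Type*} [PseudoMetricSpace X] (r : ℝ) (S : Set X) : Prop :=
  ∀ x ∈ S, ∀ y ∈ S, x ≠ y → r ≤ dist x y

/-- Finite exponential moment. -/
def expMoment {d : ℕ} (μ₀ : Measure (SLZ d)) : Prop :=
  ∃ α > (0:ℝ), ∫⁻ g, ENNReal.ofReal ((matNorm g) ^ α) ∂μ₀ < ⊤


/-- Reduction modulo `p` of an element of `SL_d(ℤ)`. -/
def redP (p : ℕ) {d : ℕ} (γ : SLZ d) : Matrix.SpecialLinearGroup (Fin d) (ZMod p) :=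
  Matrix.SpecialLinearGroup.map (Int.castRingHom (ZMod p)) γ

/-- The random word `g(ω₁) g(ω₂) ⋯ g(ωₙ)`. -/
def word {G : Type*} [Monoid G] {Ω : Type*} (g : Ω → G) {n : ℕ} (ωs : Fin n → Ω) : G :=
  (List.ofFn fun i => g (ωs i)).prod

/-- The orbit of `x` under a set of elements of `SL_d(𝔽_p)`. -/
def orbitSet {p d : ℕ} (Γs : Set (Matrix.SpecialLinearGroup (Fin d) (ZMod p)))
    (x : Fin d → ZMod p) : Set (Fin d → ZMod p) :=
  (fun γ : Matrix.SpecialLinearGroup (Fin d) (ZMod p) => γ.1.mulVec x) '' Γs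

/-- The Dirac function at `x`. -/
def deltaF {p d : ℕ} (x : Fin d → ZMod p) : (Fin d → ZMod p) → ℝ :=
  fun y => if y = x then 1 else 0

/-- The Koopman operator `𝒜(μ)` applied to a function: `(𝒜(μ)f)(y) = ∑_g μ(g) f(g⁻¹y)`. -/
def pushStep {p d : ℕ} [NeZero p] (μ : AffP p d → ℝ) (f : (Fin d → ZMod p) → ℝ) :
    (Fin d → ZMod p) → ℝ :=
  fun y => ∑ g : AffP p d, μ g * f (AffOf.aff g⁻¹ y)

/-- `L²` norm of a real function on a finite set (counting measure). -/
def l2R {X : Type*} [Fintype X] (f : X → ℝ) : ℝ := Real.sqrt (∑ x, f x ^ 2)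

/-- `L²` norm of a complex function on a finite set (counting measure). -/
def l2C {X : Type*} [Fintype X] (f : X → ℂ) : ℝ := Real.sqrt (∑ x, ‖f x‖ ^ 2)

/-- The `L̂⁴` norm `(p^{-d} ∑_a |φ(a)|⁴)^{1/4}` on the dual of `𝔽_p^d`. -/
def hatL4 {p d : ℕ} [NeZero p] (φ : (Fin d → ZMod p) → ℝ) : ℝ :=
  ((p : ℝ) ^ (-(d : ℤ)) * ∑ a, |φ a| ^ 4) ^ ((1 : ℝ) / 4)

/-- The discrete Fourier transform `f̂(a) = ∑_x e(⟨a,x⟩) f(x)` on `𝔽_p^d`. -/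
def fhat {p d : ℕ} [NeZero p] (f : (Fin d → ZMod p) → ℝ) (a : Fin d → ZMod p) : ℂ :=
  ∑ x, Complex.exp (2 * Real.pi * Complex.I * (((∑ i, a i * x i : ZMod p).val : ℂ)) / (p : ℂ)) * f x

noncomputable instance {p d : ℕ} [NeZero p]
    (Γ : Subgroup (Matrix.SpecialLinearGroup (Fin d) (ZMod p))) : Fintype ↥Γ :=
  Fintype.ofFinite _

/-- The projection of a probability function on `SL_d(𝔽_p) ⋉ 𝔽_p^d` to `Γ`. -/
def projToGamma {p d : ℕ} [NeZero p] (Γ : Subgroup (Matrix.SpecialLinearGroup (Fin d) (ZMod p)))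
    (μ : AffP p d → ℝ) (z : ↥Γ) : ℝ :=
  ∑ v : Fin d → ZMod p, μ ⟨(z : Matrix.SpecialLinearGroup (Fin d) (ZMod p)), v⟩

/-- Spectral gap condition `‖ℒ⁰_θ(μ₀)‖ ≤ c` for the left regular representation of `Γ`
restricted to mean-zero functions. -/
def lregGap {p d : ℕ} [NeZero p] (Γ : Subgroup (Matrix.SpecialLinearGroup (Fin d) (ZMod p)))
    (μ₀ : ↥Γ → ℝ) (c : ℝ) : Prop :=
  ∀ f : ↥Γ → ℂ, (∑ z : ↥Γ, f z) = 0 →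
    l2C (fun z : ↥Γ => ∑ w : ↥Γ, (μ₀ w : ℂ) * f (w⁻¹ * z)) ≤ c * l2C f

end

/-!
Let `h = η ⋆ η̃` be the autocorrelation of `η`, so that `ĥ = |η̂|²` and, by Parseval,
`‖η̂‖⁴_{L̂⁴} = ‖h‖²`. Jensen's inequality in each frequency bounds `‖𝒜̂(μ₀)|η̂|‖⁴_{L̂⁴}` by
`‖𝒜(μ₀)h‖²`, where `𝒜(μ₀)` averages `h ∘ w⁻¹` over `w ∼ μ₀` on the physical side.

Split `h` into its orbit average `Ph`, which `𝒜(μ₀)` fixes, and a remainder with mean zero on every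
`Γ`-orbit; on each orbit the spectral gap of the regular representation contracts the remainder
by `2⁻⁵`. Since `{0}` is the only orbit with fewer than `p` points, `‖Ph‖² ≤ h(0)² + 1/p`. The
bound `η ≤ (40/41)‖η‖₂` makes `h(0)² = ‖η‖₂⁴` at most `1681/1762` of the additive energy `‖h‖²`,
and the lower bound on `‖η̂‖_{L̂⁴}` gives `1/p ≤ 19⁻⁴‖h‖²`. Hence
`‖𝒜(μ₀)h‖² ≤ (1681/1762 + 19⁻⁴ + 2⁻¹⁰)‖h‖²`, and this constant is below `2^(-2^(-32))`.
-/

open Finset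

section Autocorrelation

variable {V : Type*} [AddCommGroup V] [Fintype V]

def autocorr (f : V → ℝ) (z : V) : ℝ := ∑ y, f (z + y) * f y

lemma autocorr_zero (f : V → ℝ) : autocorr f 0 = ∑ y, f y ^ 2 := by
  simp [autocorr, sq]

lemma sum_autocorr (f : V → ℝ) : ∑ z, autocorr f z = (∑ y, f y) ^ 2 := by
  simp only [autocorr]
  rw [sum_comm, sq, mul_sum]
  refine sum_congr rfl fun y _ => ?_
  rw [← sum_mul, Fintype.sum_equiv (Equiv.addRight y) (fun z => f (z + y)) f fun _ => rfl]

lemma autocorr_nonneg {f : V → ℝ} (hf : ∀ x, 0 ≤ f x) (z : V) : 0 ≤ autocorr f z :=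
  sum_nonneg fun y _ => mul_nonneg (hf _) (hf y)

lemma mul_le_autocorr_sub {f : V → ℝ} (hf : ∀ x, 0 ≤ f x) (x y : V) :
    f x * f y ≤ autocorr f (x - y) := by
  unfold autocorr
  simpa using single_le_sum (f := fun v => f (x - y + v) * f v)
    (fun v _ => mul_nonneg (hf _) (hf v)) (mem_univ y)

lemma sum_autocorr_sq (f : V → ℝ) :
    ∑ z, autocorr f z ^ 2 = ∑ y, ∑ x, autocorr f (x - y) * (f x * f y) := by
  calc ∑ z, autocorr f z ^ 2 = ∑ z, ∑ y, autocorr f z * (f (z + y) * f y) := by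
        simp only [sq, autocorr, mul_sum]
    _ = ∑ y, ∑ x, autocorr f (x - y) * (f x * f y) := by
        rw [sum_comm]
        refine sum_congr rfl fun y _ => ?_
        exact Fintype.sum_equiv (Equiv.addRight y) _ _ fun z => by simp

/-- In `∑ z, (f ⋆ f)(z)² = ∑ x y, (f ⋆ f)(x - y) f x f y`, use `(f ⋆ f)(0) = ∑ f²` on the
diagonal and `(f ⋆ f)(x - y) ≥ f x f y` off it. -/
lemma le_sum_autocorr_sq {f : V → ℝ} (hf : ∀ x, 0 ≤ f x) :
    2 * (∑ x, f x ^ 2) ^ 2 - ∑ x, f x ^ 4 ≤ ∑ z, autocorr f z ^ 2 := by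
  classical
  set S := ∑ x, f x ^ 2
  have hterm : ∀ y x, f x ^ 2 * f y ^ 2 + (if x = y then (S - f y ^ 2) * f y ^ 2 else 0)
      ≤ autocorr f (x - y) * (f x * f y) := by
    intro y x
    split_ifs with hxy
    · subst hxy
      rw [sub_self, autocorr_zero]
      exact le_of_eq (by ring)
    · have := mul_le_autocorr_sub hf x y
      nlinarith [mul_nonneg (hf x) (hf y)]
  calc 2 * S ^ 2 - ∑ x, f x ^ 4
      = ∑ y, ∑ x, (f x ^ 2 * f y ^ 2 + (if x = y then (S - f y ^ 2) * f y ^ 2 else 0)) := by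
        simp only [sum_add_distrib, sum_ite_eq', mem_univ, if_true, ← sum_mul]
        simp only [sub_mul, sum_sub_distrib, ← mul_sum]
        rw [show ∑ x, f x ^ 2 = S from rfl,
          show ∑ x, f x ^ 2 * f x ^ 2 = ∑ x, f x ^ 4 from sum_congr rfl fun x _ => by ring]
        ring
    _ ≤ ∑ z, autocorr f z ^ 2 := by
        rw [sum_autocorr_sq]
        exact sum_le_sum fun y _ => sum_le_sum fun x _ => hterm y x

lemma two_sub_sq_mul_autocorr_zero_sq_le {f : V → ℝ} (hf : ∀ x, 0 ≤ f x) {κ : ℝ}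
    (hκ : ∀ x, f x ≤ κ * l2R f) :
    (2 - κ ^ 2) * autocorr f 0 ^ 2 ≤ ∑ z, autocorr f z ^ 2 := by
  have hS : l2R f ^ 2 = ∑ x, f x ^ 2 := Real.sq_sqrt (sum_nonneg fun x _ => sq_nonneg _)
  have hsq : ∀ x, f x ^ 2 ≤ κ ^ 2 * ∑ y, f y ^ 2 := fun x => by
    rw [← hS, ← mul_pow]
    exact pow_le_pow_left₀ (hf x) (hκ x) 2
  have h4 : ∑ x, f x ^ 4 ≤ κ ^ 2 * (∑ x, f x ^ 2) ^ 2 := by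
    rw [sq (∑ x, f x ^ 2), ← mul_assoc, mul_sum]
    exact sum_le_sum fun x _ => by
      nlinarith [mul_le_mul_of_nonneg_right (hsq x) (sq_nonneg (f x))]
  rw [autocorr_zero]
  linarith [le_sum_autocorr_sq hf]

end Autocorrelation

section VecFourier

variable {R ι : Type*} [CommRing R] [Fintype R] [Fintype ι] [DecidableEq ι] (ψ : AddChar R ℂ)

def vecFourier (f : (ι → R) → ℝ) (a : ι → R) : ℂ := ∑ x, ψ (a ⬝ᵥ x) * f x

lemma sum_addChar_dotProduct_eq_zero {ψ : AddChar R ℂ} (hψ : ψ.IsPrimitive) {z : ι → R}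
    (hz : z ≠ 0) : ∑ a : ι → R, ψ (a ⬝ᵥ z) = 0 := by
  classical
  obtain ⟨i, hi⟩ := Function.ne_iff.mp hz
  obtain ⟨c, hc⟩ := AddChar.ne_one_iff.mp (hψ hi)
  let χ : AddChar (ι → R) ℂ :=
    ψ.compAddMonoidHom (AddMonoidHom.mk' (· ⬝ᵥ z) fun a b => add_dotProduct a b z)
  have hχ : χ ≠ 1 := AddChar.ne_one_iff.mpr ⟨Pi.single i c, by simpa [χ, mul_comm] using hc⟩
  exact AddChar.sum_eq_zero_of_ne_one hχ

lemma sum_vecFourier {ψ : AddChar R ℂ} (hψ : ψ.IsPrimitive) (f : (ι → R) → ℝ) :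
    ∑ a, vecFourier ψ f a = Fintype.card (ι → R) * f 0 := by
  simp only [vecFourier]
  rw [sum_comm, sum_eq_single (0 : ι → R)]
  · simp
  · intro x _ hx
    rw [← sum_mul, sum_addChar_dotProduct_eq_zero hψ hx, zero_mul]
  · simp

lemma vecFourier_autocorr (f : (ι → R) → ℝ) (a : ι → R) :
    vecFourier ψ (autocorr f) a = ((‖vecFourier ψ f a‖ ^ 2 : ℝ) : ℂ) := by
  have hpair : ∀ x y, ψ (a ⬝ᵥ x) * (starRingEnd ℂ) (ψ (a ⬝ᵥ y)) = ψ (a ⬝ᵥ (x - y)) := by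
    intro x y
    rw [← AddChar.map_neg_eq_conj, ← AddChar.map_add_eq_mul, dotProduct_sub, sub_eq_add_neg]
  calc vecFourier ψ (autocorr f) a
      = ∑ y, ∑ z, ψ (a ⬝ᵥ z) * f (z + y) * f y := by
        simp only [vecFourier, autocorr, Complex.ofReal_sum, Complex.ofReal_mul, mul_sum]
        rw [sum_comm]
        simp only [mul_assoc]
    _ = ∑ y, ∑ x, ψ (a ⬝ᵥ (x - y)) * f x * f y := by
        refine sum_congr rfl fun y _ => Fintype.sum_equiv (Equiv.addRight y) _ _ fun z => ?_
        simp
    _ = vecFourier ψ f a * (starRingEnd ℂ) (vecFourier ψ f a) := by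
        simp only [vecFourier, map_sum, map_mul, Complex.conj_ofReal, sum_mul_sum, ← hpair]
        rw [sum_comm]
        exact sum_congr rfl fun y _ => sum_congr rfl fun x _ => by ring
    _ = ((‖vecFourier ψ f a‖ ^ 2 : ℝ) : ℂ) := by
        rw [Complex.mul_conj', Complex.ofReal_pow]

lemma sum_norm_vecFourier_sq {ψ : AddChar R ℂ} (hψ : ψ.IsPrimitive) (f : (ι → R) → ℝ) :
    ∑ a, ‖vecFourier ψ f a‖ ^ 2 = Fintype.card (ι → R) * ∑ x, f x ^ 2 := by
  have h := sum_vecFourier hψ (autocorr f)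
  simp only [vecFourier_autocorr, autocorr_zero] at h
  exact_mod_cast h

lemma sum_norm_vecFourier_pow_four {ψ : AddChar R ℂ} (hψ : ψ.IsPrimitive) (f : (ι → R) → ℝ) :
    ∑ a, ‖vecFourier ψ f a‖ ^ 4 = Fintype.card (ι → R) * ∑ z, autocorr f z ^ 2 := by
  have h := sum_norm_vecFourier_sq hψ (autocorr f)
  simpa only [vecFourier_autocorr, Complex.norm_real, Real.norm_eq_abs, sq_abs, ← pow_mul]
    using h

lemma vecFourier_comp_smul_inv (A : Matrix.SpecialLinearGroup ι R)
    (f : (ι → R) → ℝ) (a : ι → R) :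
    vecFourier ψ (fun x => f (A⁻¹ • x)) a = vecFourier ψ f (A.1ᵀ *ᵥ a) := by
  refine (Fintype.sum_equiv (MulAction.toPerm A : Equiv.Perm (ι → R)) _ _ fun x => ?_).symm
  simp only [MulAction.toPerm_apply, inv_smul_smul, mulVec_transpose, ← dotProduct_mulVec]
  rfl

end VecFourier

section OrbitAverage

variable {G X : Type*} [Group G] [Fintype G] [MulAction G X] [Fintype X]

noncomputable def avgOp (μ : G → ℝ) (φ : X → ℝ) (x : X) : ℝ := ∑ w, μ w * φ (w⁻¹ • x)

variable (G) in
/-- By orbit–stabilizer this is the mean of `φ` over the orbit of `x`: the orthogonal projection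
onto `G`-invariant functions. -/
noncomputable def orbitAvg (φ : X → ℝ) (x : X) : ℝ := (Fintype.card G : ℝ)⁻¹ * ∑ g : G, φ (g • x)

lemma sum_comp_smul {M : Type*} [AddCommMonoid M] (g : G) (φ : X → M) :
    ∑ x, φ (g • x) = ∑ x, φ x :=
  Fintype.sum_equiv (MulAction.toPerm g) _ _ fun _ => rfl

variable (G) in
lemma sum_sum_smul {M : Type*} [AddCommMonoid M] (φ : X → M) :
    ∑ x, ∑ g : G, φ (g • x) = Fintype.card G • ∑ x, φ x := by
  rw [sum_comm]
  simp only [sum_comp_smul, sum_const, card_univ]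

lemma sum_orbitAvg (φ : X → ℝ) : ∑ x, orbitAvg G φ x = ∑ x, φ x := by
  simp only [orbitAvg, ← mul_sum, sum_sum_smul, nsmul_eq_mul]
  field_simp

lemma orbitAvg_nonneg {φ : X → ℝ} (hφ : ∀ x, 0 ≤ φ x) (x : X) : 0 ≤ orbitAvg G φ x :=
  mul_nonneg (by positivity) (sum_nonneg fun g _ => hφ _)

lemma orbitAvg_sub (φ ψ : X → ℝ) : orbitAvg G (φ - ψ) = orbitAvg G φ - orbitAvg G ψ := by
  ext x
  simp [orbitAvg, sum_sub_distrib, mul_sub]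

lemma orbitAvg_smul (φ : X → ℝ) (g : G) (x : X) : orbitAvg G φ (g • x) = orbitAvg G φ x := by
  simp only [orbitAvg, smul_smul]
  congr 1
  exact Fintype.sum_equiv (Equiv.mulRight g) _ _ fun _ => rfl

lemma orbitAvg_orbitAvg (φ : X → ℝ) : orbitAvg G (orbitAvg G φ) = orbitAvg G φ := by
  ext x
  change (Fintype.card G : ℝ)⁻¹ * ∑ g : G, orbitAvg G φ (g • x) = _
  simp only [orbitAvg_smul, sum_const, card_univ, nsmul_eq_mul]
  field_simp

lemma sum_orbitAvg_mul (φ ψ : X → ℝ) :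
    ∑ x, orbitAvg G φ x * ψ x = ∑ x, orbitAvg G φ x * orbitAvg G ψ x := by
  rw [← sum_orbitAvg (G := G) (fun x => orbitAvg G φ x * ψ x)]
  refine sum_congr rfl fun x _ => ?_
  change (Fintype.card G : ℝ)⁻¹ * ∑ g : G, orbitAvg G φ (g • x) * ψ (g • x) = _
  simp only [orbitAvg_smul, ← mul_sum]
  unfold orbitAvg
  ring

lemma avgOp_add (μ : G → ℝ) (φ ψ : X → ℝ) : avgOp μ (φ + ψ) = avgOp μ φ + avgOp μ ψ := by
  ext x
  simp [avgOp, mul_add, sum_add_distrib]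

lemma avgOp_orbitAvg {μ : G → ℝ} (hμ : ∑ w, μ w = 1) (φ : X → ℝ) :
    avgOp μ (orbitAvg G φ) = orbitAvg G φ := by
  ext x
  simp only [avgOp, orbitAvg_smul, ← sum_mul, hμ, one_mul]

lemma orbitAvg_avgOp {μ : G → ℝ} (hμ : ∑ w, μ w = 1) (φ : X → ℝ) :
    orbitAvg G (avgOp μ φ) = orbitAvg G φ := by
  have hshift : ∀ (w : G) (x : X), ∑ g : G, φ (w⁻¹ • g • x) = ∑ g : G, φ (g • x) := by
    intro w x
    simp only [smul_smul]
    exact Fintype.sum_equiv (Equiv.mulLeft w⁻¹) _ _ fun _ => rfl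
  ext x
  simp only [orbitAvg, avgOp]
  rw [sum_comm]
  simp only [← mul_sum, hshift, ← sum_mul, hμ, one_mul]

lemma sum_sq_orbitAvg_add {ψ : X → ℝ} (hψ : orbitAvg G ψ = 0) (φ : X → ℝ) :
    ∑ x, (orbitAvg G φ x + ψ x) ^ 2 = ∑ x, orbitAvg G φ x ^ 2 + ∑ x, ψ x ^ 2 := by
  have hcross : ∑ x, orbitAvg G φ x * ψ x = 0 := by rw [sum_orbitAvg_mul, hψ]; simp
  simp only [add_sq, sum_add_distrib, mul_assoc, ← mul_sum, hcross]
  ring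

/-- The spectral gap of `μ` in the regular representation, transported to each orbit through
`g ↦ g • x`, contracts functions with vanishing orbit averages. -/
lemma sum_avgOp_sq_le_of_orbitAvg_eq_zero {μ : G → ℝ} {c : ℝ}
    (hgap : ∀ f : G → ℂ, ∑ z, f z = 0 →
      l2C (fun z => ∑ w, (μ w : ℂ) * f (w⁻¹ * z)) ≤ c * l2C f)
    {φ : X → ℝ} (hφ : orbitAvg G φ = 0) :
    ∑ x, avgOp μ φ x ^ 2 ≤ c ^ 2 * ∑ x, φ x ^ 2 := by
  have hl2C : ∀ u : G → ℝ, l2C (fun g => (u g : ℂ)) ^ 2 = ∑ g, u g ^ 2 := fun u => by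
    rw [l2C, Real.sq_sqrt (sum_nonneg fun _ _ => sq_nonneg _)]
    simp
  have horbit : ∀ x, ∑ g : G, avgOp μ φ (g • x) ^ 2 ≤ c ^ 2 * ∑ g : G, φ (g • x) ^ 2 := by
    intro x
    have hmean : ∑ g : G, (φ (g • x) : ℂ) = 0 := by
      have := congrFun hφ x
      simp only [orbitAvg, Pi.zero_apply, mul_eq_zero, inv_eq_zero, Nat.cast_eq_zero,
        Fintype.card_ne_zero, false_or] at this
      exact_mod_cast this
    have hK : (fun z : G => ∑ w, (μ w : ℂ) * (φ ((w⁻¹ * z) • x) : ℂ))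
        = fun z => ((avgOp μ φ (z • x) : ℝ) : ℂ) := by
      ext z
      simp [avgOp, mul_smul]
    have h := hgap (fun g => (φ (g • x) : ℂ)) hmean
    rw [hK] at h
    have := pow_le_pow_left₀ (by unfold l2C; positivity) h 2
    rwa [mul_pow, hl2C (fun g => φ (g • x)), hl2C (fun g => avgOp μ φ (g • x))] at this
  have hG : (0 : ℝ) < Fintype.card G := Nat.cast_pos.mpr Fintype.card_pos
  refine le_of_mul_le_mul_left ?_ hG
  calc (Fintype.card G : ℝ) * ∑ x, avgOp μ φ x ^ 2 = ∑ x, ∑ g : G, avgOp μ φ (g • x) ^ 2 := by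
        rw [sum_sum_smul G (fun y => avgOp μ φ y ^ 2), nsmul_eq_mul]
    _ ≤ ∑ x, c ^ 2 * ∑ g : G, φ (g • x) ^ 2 := sum_le_sum fun x _ => horbit x
    _ = Fintype.card G * (c ^ 2 * ∑ x, φ x ^ 2) := by
        rw [← mul_sum, sum_sum_smul G (fun y => φ y ^ 2), nsmul_eq_mul, mul_left_comm]

lemma sum_avgOp_sq_le {μ : G → ℝ} (hμ : ∑ w, μ w = 1) {c : ℝ}
    (hgap : ∀ f : G → ℂ, ∑ z, f z = 0 →
      l2C (fun z => ∑ w, (μ w : ℂ) * f (w⁻¹ * z)) ≤ c * l2C f)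
    (h : X → ℝ) :
    ∑ x, avgOp μ h x ^ 2 ≤ ∑ x, orbitAvg G h x ^ 2 + c ^ 2 * ∑ x, h x ^ 2 := by
  set φ := h - orbitAvg G h
  have hφ : orbitAvg G φ = 0 := by rw [orbitAvg_sub, orbitAvg_orbitAvg, sub_self]
  have hdecomp : h = orbitAvg G h + φ := by simp [φ]
  have hKh : avgOp μ h = orbitAvg G h + avgOp μ φ := by
    conv_lhs => rw [hdecomp]
    rw [avgOp_add, avgOp_orbitAvg hμ]
  have hh := sum_sq_orbitAvg_add hφ h
  have hKφ := sum_sq_orbitAvg_add (by rw [orbitAvg_avgOp hμ, hφ]) h (ψ := avgOp μ φ)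
  simp only [← Pi.add_apply, ← hdecomp, ← hKh] at hh hKφ
  have hgapφ := sum_avgOp_sq_le_of_orbitAvg_eq_zero hgap hφ
  have hφh : ∑ x, φ x ^ 2 ≤ ∑ x, h x ^ 2 := by
    linarith [sum_nonneg fun x (_ : x ∈ univ) => sq_nonneg (orbitAvg G h x)]
  linarith [mul_le_mul_of_nonneg_left hφh (sq_nonneg c)]

lemma ncard_orbit_mul_orbitAvg_le {h : X → ℝ} (hh : ∀ x, 0 ≤ h x) (x : X) :
    (MulAction.orbit G x).ncard * orbitAvg G h x ≤ ∑ y, h y := by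
  classical
  calc (MulAction.orbit G x).ncard * orbitAvg G h x
      = ∑ y ∈ (MulAction.orbit G x).toFinset, orbitAvg G h y := by
        rw [Set.ncard_eq_toFinset_card', ← nsmul_eq_mul, ← sum_const]
        refine sum_congr rfl fun y hy => ?_
        obtain ⟨g, rfl⟩ := Set.mem_toFinset.mp hy
        exact (orbitAvg_smul h g x).symm
    _ ≤ ∑ y, orbitAvg G h y := sum_le_univ_sum_of_nonneg (orbitAvg_nonneg hh)
    _ = ∑ y, h y := sum_orbitAvg h

/-- `∑ (orbitAvg G h)² = ∑ orbitAvg G h * h`, and away from `x₀` the orbit average of a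
probability density is at most `1 / N`. -/
lemma sum_orbitAvg_sq_le {h : X → ℝ} (hh : ∀ x, 0 ≤ h x) (h1 : ∑ x, h x = 1)
    {x₀ : X} (hx₀ : ∀ g : G, g • x₀ = x₀) {N : ℝ} (hN : 0 < N)
    (horbit : ∀ x, x ≠ x₀ → N ≤ (MulAction.orbit G x).ncard) :
    ∑ x, orbitAvg G h x ^ 2 ≤ h x₀ ^ 2 + N⁻¹ := by
  classical
  have hPx₀ : orbitAvg G h x₀ = h x₀ := by
    simp only [orbitAvg, hx₀, sum_const, card_univ, nsmul_eq_mul]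
    field_simp
  have hP : ∀ x, x ≠ x₀ → orbitAvg G h x ≤ N⁻¹ := fun x hx => by
    rw [← one_div, le_div_iff₀ hN, mul_comm, ← h1]
    exact (mul_le_mul_of_nonneg_right (horbit x hx) (orbitAvg_nonneg hh x)).trans
      (ncard_orbit_mul_orbitAvg_le hh x)
  have hterm : ∀ x, orbitAvg G h x * h x ≤ (if x = x₀ then h x₀ else 0) * h x + h x / N := by
    intro x
    split_ifs with hx
    · subst hx
      rw [hPx₀]
      linarith [div_nonneg (hh x) hN.le]
    · rw [zero_mul, zero_add, div_eq_mul_inv, mul_comm (h x)]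
      exact mul_le_mul_of_nonneg_right (hP x hx) (hh x)
  calc ∑ x, orbitAvg G h x ^ 2 = ∑ x, orbitAvg G h x * h x := by
        simp only [sq]
        exact (sum_orbitAvg_mul h h).symm
    _ ≤ ∑ x, ((if x = x₀ then h x₀ else 0) * h x + h x / N) := sum_le_sum fun x _ => hterm x
    _ = h x₀ ^ 2 + N⁻¹ := by
        simp [sum_add_distrib, ite_mul, ← sum_div, h1, sq]

end OrbitAverage

section MatrixGroupAverage

variable {R ι : Type*} [CommRing R] [Fintype R] [Fintype ι] [DecidableEq ι] (ψ : AddChar R ℂ)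
  {Γ : Subgroup (Matrix.SpecialLinearGroup ι R)} [Fintype Γ]

lemma vecFourier_avgOp (μ : Γ → ℝ) (f : (ι → R) → ℝ) (a : ι → R) :
    vecFourier ψ (avgOp μ f) a
      = ∑ w : Γ, (μ w : ℂ) * vecFourier ψ f ((w : Matrix.SpecialLinearGroup ι R).1ᵀ *ᵥ a) := by
  simp_rw [← vecFourier_comp_smul_inv]
  simp only [vecFourier, avgOp, Complex.ofReal_sum, Complex.ofReal_mul, mul_sum]
  rw [sum_comm]
  refine sum_congr rfl fun w _ => sum_congr rfl fun x _ => ?_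
  rw [Subgroup.smul_def, Subgroup.coe_inv]
  ring

/-- Jensen's inequality in each frequency, followed by Parseval for `avgOp μ (f ⋆ f)`, whose
Fourier transform is the `μ`-average of `‖f̂ (wᵀ a)‖²`. -/
lemma sum_avg_norm_vecFourier_pow_four_le {ψ : AddChar R ℂ} (hψ : ψ.IsPrimitive) {μ : Γ → ℝ}
    (hμ0 : ∀ w, 0 ≤ μ w) (hμ1 : ∑ w, μ w = 1) (f : (ι → R) → ℝ) :
    ∑ a, (∑ w : Γ, μ w * ‖vecFourier ψ f ((w : Matrix.SpecialLinearGroup ι R).1ᵀ *ᵥ a)‖) ^ 4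
      ≤ Fintype.card (ι → R) * ∑ x, avgOp μ (autocorr f) x ^ 2 := by
  rw [← sum_norm_vecFourier_sq hψ]
  refine sum_le_sum fun a _ => ?_
  set ν : Γ → ℝ := fun w => ‖vecFourier ψ f ((w : Matrix.SpecialLinearGroup ι R).1ᵀ *ᵥ a)‖
  have hjensen : (∑ w, μ w * ν w) ^ 2 ≤ ∑ w, μ w * ν w ^ 2 := by
    simpa only [smul_eq_mul] using (convexOn_pow 2).map_sum_le (fun w _ => hμ0 w) hμ1
      (fun w _ => Set.mem_Ici.mpr (norm_nonneg _))
  have hhat : ‖vecFourier ψ (avgOp μ (autocorr f)) a‖ = ∑ w, μ w * ν w ^ 2 := by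
    simp only [vecFourier_avgOp, vecFourier_autocorr, ← Complex.ofReal_mul, ← Complex.ofReal_sum,
      Complex.norm_real, Real.norm_eq_abs]
    exact abs_of_nonneg (sum_nonneg fun w _ => mul_nonneg (hμ0 w) (sq_nonneg _))
  rw [hhat, show 4 = 2 * 2 by rfl, pow_mul]
  exact pow_le_pow_left₀ (sq_nonneg _) hjensen 2

end MatrixGroupAverage

section ModP

variable {p d : ℕ} [NeZero p]

lemma fhat_eq_vecFourier (f : (Fin d → ZMod p) → ℝ) (a : Fin d → ZMod p) :
    fhat f a = vecFourier ZMod.stdAddChar f a := by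
  simp only [fhat, vecFourier, ZMod.stdAddChar_apply, ZMod.toCircle_apply]
  rfl

lemma orbitSet_eq_orbit (Γ : Subgroup (Matrix.SpecialLinearGroup (Fin d) (ZMod p)))
    (x : Fin d → ZMod p) :
    orbitSet (Γ : Set (Matrix.SpecialLinearGroup (Fin d) (ZMod p))) x = MulAction.orbit Γ x := by
  ext y
  constructor
  · rintro ⟨γ, hγ, rfl⟩
    exact ⟨⟨γ, hγ⟩, rfl⟩
  · rintro ⟨g, rfl⟩
    exact ⟨g, g.2, rfl⟩

lemma hatL4_nonneg (φ : (Fin d → ZMod p) → ℝ) : 0 ≤ hatL4 φ :=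
  Real.rpow_nonneg (by positivity) _

lemma hatL4_pow_four (φ : (Fin d → ZMod p) → ℝ) :
    hatL4 φ ^ 4 = (p : ℝ) ^ (-(d : ℤ)) * ∑ a, φ a ^ 4 := by
  rw [hatL4, ← Real.rpow_natCast, ← Real.rpow_mul (by positivity)]
  norm_num [Even.pow_abs ⟨2, rfl⟩]

lemma hatL4_le_mul_of_sum_pow_four_le {φ χ : (Fin d → ZMod p) → ℝ} {t : ℝ} (ht : 0 ≤ t)
    (h : ∑ a, φ a ^ 4 ≤ t ^ 4 * ∑ a, χ a ^ 4) : hatL4 φ ≤ t * hatL4 χ := by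
  refine le_of_pow_le_pow_left₀ four_ne_zero (mul_nonneg ht (hatL4_nonneg χ)) ?_
  rw [mul_pow, hatL4_pow_four, hatL4_pow_four, mul_left_comm]
  exact mul_le_mul_of_nonneg_left h (by positivity)

lemma hatL4_norm_vecFourier_pow_four (η : (Fin d → ZMod p) → ℝ) :
    hatL4 (fun a => ‖vecFourier ZMod.stdAddChar η a‖) ^ 4 = ∑ z, autocorr η z ^ 2 := by
  rw [hatL4_pow_four, sum_norm_vecFourier_pow_four (ZMod.isPrimitive_stdAddChar p),
    Fintype.card_fun, ZMod.card, Fintype.card_fin, Nat.cast_pow, _root_.zpow_neg, zpow_natCast,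
    inv_mul_cancel_left₀ (pow_ne_zero _ (Nat.cast_ne_zero.mpr (NeZero.ne p)))]

lemma pow_four_mul_inv_le_sum_autocorr_sq {η : (Fin d → ZMod p) → ℝ} {c : ℝ} (hc : 0 ≤ c)
    (h : c * (p : ℝ) ^ (-(1 : ℝ) / 4) ≤ hatL4 (fun a => ‖vecFourier ZMod.stdAddChar η a‖)) :
    c ^ 4 * (p : ℝ)⁻¹ ≤ ∑ z, autocorr η z ^ 2 := by
  have hp : (0 : ℝ) ≤ p := Nat.cast_nonneg p
  rw [← hatL4_norm_vecFourier_pow_four]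
  calc c ^ 4 * (p : ℝ)⁻¹ = (c * (p : ℝ) ^ (-(1 : ℝ) / 4)) ^ 4 := by
        rw [mul_pow, ← Real.rpow_mul_natCast hp]
        norm_num [Real.rpow_neg_one]
    _ ≤ _ := pow_le_pow_left₀ (by positivity) h 4

end ModP

lemma one_sub_le_two_rpow_neg {x : ℝ} (hx : 0 ≤ x) : 1 - x ≤ 2 ^ (-x) := by
  rw [Real.rpow_def_of_pos two_pos]
  nlinarith [Real.add_one_le_exp (Real.log 2 * -x), Real.log_two_lt_d9]

lemma decay_constant_le :
    (1681 / 1762 + 1 / 130321 + 1 / 1024 : ℝ) ≤ ((2 : ℝ) ^ (-(2 : ℝ) ^ (-(34 : ℝ)))) ^ 4 := by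
  have h32 : (2 : ℝ) ^ (-(2 : ℝ) ^ (-(34 : ℝ)) * 4) = (2 : ℝ) ^ (-(2 ^ 32 : ℝ)⁻¹) := by
    congr 1
    rw [Real.rpow_neg two_pos.le, Real.rpow_ofNat]
    norm_num
  rw [← Real.rpow_mul_natCast two_pos.le, Nat.cast_ofNat, h32]
  refine le_trans ?_ (one_sub_le_two_rpow_neg (by positivity))
  norm_num

theorem l4_decay_general
    {p d : ℕ} [NeZero p]
    (Γ : Subgroup (Matrix.SpecialLinearGroup (Fin d) (ZMod p)))
    (μ₀ : ↥Γ → ℝ) (hμnn : ∀ g, 0 ≤ μ₀ g) (hμ1 : ∑ g : ↥Γ, μ₀ g = 1)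
    (η : (Fin d → ZMod p) → ℝ) (hηnn : ∀ x, 0 ≤ η x) (hη1 : ∑ x, η x = 1)
    (horb : ∀ x : Fin d → ZMod p,
      (orbitSet (Γ : Set (Matrix.SpecialLinearGroup (Fin d) (ZMod p))) x).ncard < p → x = 0)
    (hL : lregGap Γ μ₀ (((2:ℝ) ^ (5:ℕ))⁻¹))
    (hmass : ∀ x : Fin d → ZMod p, η x ≤ (40 / 41) * l2R η)
    (hL4 : 19 * (p : ℝ) ^ (-(1:ℝ)/4) ≤ hatL4 (fun a => ‖fhat η a‖)) :
    hatL4 (fun a => ∑ w : ↥Γ, μ₀ w * ‖fhat η ((w : Matrix.SpecialLinearGroup (Fin d) (ZMod p)).1.transpose.mulVec a)‖) ≤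
      (2:ℝ) ^ (-(2:ℝ) ^ (-(34:ℝ))) * hatL4 (fun a => ‖fhat η a‖) := by
  simp only [fhat_eq_vecFourier] at hL4 ⊢
  have hψ := ZMod.isPrimitive_stdAddChar p
  have hbig : ∀ x : Fin d → ZMod p, x ≠ 0 → (p : ℝ) ≤ (MulAction.orbit Γ x).ncard := by
    intro x hx
    have := mt (horb x) hx
    rw [not_lt, orbitSet_eq_orbit] at this
    exact_mod_cast this
  have hproj := sum_orbitAvg_sq_le (G := Γ) (autocorr_nonneg hηnn)
    (by rw [sum_autocorr, hη1, one_pow]) (fun g => smul_zero g)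
    (Nat.cast_pos.mpr (Nat.pos_of_neZero p)) hbig
  have hphys := sum_avgOp_sq_le hμ1 hL (autocorr η)
  have henergy := two_sub_sq_mul_autocorr_zero_sq_le hηnn hmass
  have hspread := pow_four_mul_inv_le_sum_autocorr_sq (by norm_num) hL4
  norm_num at hphys henergy hspread
  have hS : 0 ≤ ∑ z, autocorr η z ^ 2 := sum_nonneg fun z _ => sq_nonneg _
  refine hatL4_le_mul_of_sum_pow_four_le (by positivity)
    ((sum_avg_norm_vecFourier_pow_four_le hψ hμnn hμ1 η).trans ?_)
  rw [sum_norm_vecFourier_pow_four hψ, mul_left_comm]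
  gcongr
  calc ∑ x, avgOp μ₀ (autocorr η) x ^ 2
      ≤ (1681 / 1762 + 1 / 130321 + 1 / 1024) * ∑ z, autocorr η z ^ 2 := by linarith
    _ ≤ _ := mul_le_mul_of_nonneg_right decay_constant_le hS

/-- **Lemma (`L̂⁴` decay, after Lindenstrauss–Varjú).** -/
theorem l4_decay
    {p d : ℕ} [NeZero p] (hp : p.Prime)
    (Γ : Subgroup (Matrix.SpecialLinearGroup (Fin d) (ZMod p)))
    (μ₀ : ↥Γ → ℝ) (hμnn : ∀ g, 0 ≤ μ₀ g) (hμ1 : ∑ g : ↥Γ, μ₀ g = 1)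
    (η : (Fin d → ZMod p) → ℝ) (hηnn : ∀ x, 0 ≤ η x) (hη1 : ∑ x, η x = 1)
    (horb : ∀ x : Fin d → ZMod p,
      (orbitSet (Γ : Set (Matrix.SpecialLinearGroup (Fin d) (ZMod p))) x).ncard < p → x = 0)
    (hL : lregGap Γ μ₀ (((2:ℝ) ^ (5:ℕ))⁻¹))
    (hmass : ∀ x : Fin d → ZMod p, η x ≤ (40 / 41) * l2R η)
    (hL4 : 19 * (p : ℝ) ^ (-(1:ℝ)/4) ≤ hatL4 (fun a => ‖fhat η a‖)) :
    hatL4 (fun a => ∑ w : ↥Γ, μ₀ w * ‖fhat η ((w : Matrix.SpecialLinearGroup (Fin d) (ZMod p)).1.transpose.mulVec a)‖) ≤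
      (2:ℝ) ^ (-(2:ℝ) ^ (-(34:ℝ))) * hatL4 (fun a => ‖fhat η a‖) :=
  l4_decay_general Γ μ₀ hμnn hμ1 η hηnn hη1 horb hL hmass hL4
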